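/- Unique path decomposition (each sample follows a single path within the decision diagram down to a terminal node). For every feasible flow assignment of a layered decision-diagram skeleton there exist a unique length k ∈ {1, …, D} and a unique sequence of nodes u_0 = r, u_1 ∈ V_1, …, u_{k−1} ∈ V_{k−1}, u_k ∈ C (so u_{j+1} ∈ δ⁺(u_j) for each j) such that z⁺_{u_j u_{j+1}} + z⁻_{u_j u_{j+1}} = 1 for every j ∈ {0, …, k−1}, while z⁺_{uv} = 0 and z⁻_{uv} = 0 for every arc (u, v) with u ∈ V^I, v ∈ δ⁺(u) that is not one of the arcs (u_j, u_{j+1}) of this sequence. -/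

import Mathlib

/-- A layered decision-diagram skeleton: depth `D ≥ 1`, pairwise-disjoint nonempty
layers `V 0, …, V (D-1)` of internal nodes with `V 0 = {r}` (the root), and a
nonempty set `C` of terminal nodes disjoint from every layer. -/
structure Skeleton (Node : Type) [DecidableEq Node] where
  D : ℕ
  hD : 1 ≤ D
  V : ℕ → Finset Node
  C : Finset Node
  r : Node
  hV0 : V 0 = {r}
  hVne : ∀ l, l < D → (V l).Nonempty
  hVdisj : ∀ l l', l < D → l' < D → l ≠ l' → Disjoint (V l) (V l')
  hCne : C.Nonempty
  hVC : ∀ l, l < D → Disjoint (V l) C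

/-- The successor set `δ⁺(u)` of a node in layer `l`:
`V (l+1) ∪ C` if `l < D - 1`, and `C` if `l = D - 1`. -/
def Skeleton.succ {Node : Type} [DecidableEq Node] (S : Skeleton Node) (l : ℕ) :
    Finset Node :=
  if l < S.D - 1 then S.V (l + 1) ∪ S.C else S.C

/-- A feasible flow assignment for a single sample on a layered decision-diagram
skeleton: nonnegative flows `wm, wp, zm, zp`, binary `lam, d, ym, yp` (with
`d r = 1`), subject to constraints (C1)–(C5). -/
structure FeasibleFlow {Node : Type} [DecidableEq Node] (S : Skeleton Node) where
  wm : Node → ℝ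
  wp : Node → ℝ
  zm : Node → Node → ℝ
  zp : Node → Node → ℝ
  lam : ℕ → ℝ
  d : Node → ℝ
  ym : Node → Node → ℝ
  yp : Node → Node → ℝ
  wm_nonneg : ∀ u, 0 ≤ wm u
  wp_nonneg : ∀ u, 0 ≤ wp u
  zm_nonneg : ∀ u v, 0 ≤ zm u v
  zp_nonneg : ∀ u v, 0 ≤ zp u v
  lam_bin : ∀ l, l < S.D → lam l = 0 ∨ lam l = 1
  d_bin : ∀ l, l < S.D → ∀ u ∈ S.V l, d u = 0 ∨ d u = 1
  d_root : d S.r = 1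
  ym_bin : ∀ l, l < S.D → ∀ u ∈ S.V l, ∀ v ∈ S.succ l, ym u v = 0 ∨ ym u v = 1
  yp_bin : ∀ l, l < S.D → ∀ u ∈ S.V l, ∀ v ∈ S.succ l, yp u v = 0 ∨ yp u v = 1
  c1_root : wp S.r + wm S.r = 1
  c1 : ∀ l, 1 ≤ l → l < S.D → ∀ v ∈ S.V l,
      wp v + wm v = ∑ u ∈ S.V (l - 1), (zp u v + zm u v)
  c2m : ∀ l, l < S.D → ∀ u ∈ S.V l, wm u = ∑ v ∈ S.succ l, zm u v
  c2p : ∀ l, l < S.D → ∀ u ∈ S.V l, wp u = ∑ v ∈ S.succ l, zp u v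
  c3m : ∀ l, l < S.D → ∑ u ∈ S.V l, wm u ≤ 1 - lam l
  c3p : ∀ l, l < S.D → ∑ u ∈ S.V l, wp u ≤ lam l
  c4p : ∀ l, l < S.D → ∀ u ∈ S.V l, d u = ∑ v ∈ S.succ l, yp u v
  c4m : ∀ l, l < S.D → ∀ u ∈ S.V l, d u = ∑ v ∈ S.succ l, ym u v
  c5p : ∀ l, l < S.D → ∀ u ∈ S.V l, ∀ v ∈ S.succ l, zp u v ≤ yp u v
  c5m : ∀ l, l < S.D → ∀ u ∈ S.V l, ∀ v ∈ S.succ l, zm u v ≤ ym u v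

/-- The property that `(u 0, u 1, …, u k)` is the path followed by the sample:
`u 0 = r`, `u j ∈ V j` for `1 ≤ j < k`, `u k ∈ C`, every arc of the path carries
one unit of flow, and every other arc of the skeleton carries no flow. -/
def IsSamplePath {Node : Type} [DecidableEq Node] (S : Skeleton Node)
    (F : FeasibleFlow S) (k : ℕ) (u : ℕ → Node) : Prop :=
  1 ≤ k ∧ k ≤ S.D ∧ u 0 = S.r ∧
  (∀ j, 1 ≤ j → j < k → u j ∈ S.V j) ∧ u k ∈ S.C ∧
  (∀ j, j < k → F.zp (u j) (u (j + 1)) + F.zm (u j) (u (j + 1)) = 1) ∧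
  (∀ l, l < S.D → ∀ a ∈ S.V l, ∀ b ∈ S.succ l,
    (¬ ∃ j, j < k ∧ a = u j ∧ b = u (j + 1)) → F.zp a b = 0 ∧ F.zm a b = 0)

/-!
On each layer the binary variable `λ_l` leaves only one of the two kinds of flow, and on a node
carrying one unit that flow is dominated, arc by arc, by a binary vector summing to `d_u ≤ 1`;
so the unit leaves the node along a single arc. By conservation (C1) it then sits at a single
node of the next layer, or it has reached a terminal, after which every later layer is empty.
Following the unit from the root gives the path. For uniqueness, each arc of one path carries
flow, so it is an arc of the other path, and since the layers are disjoint it occurs there at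
the same position.
-/

theorem Finset.exists_eq_one_of_le_of_sum_eq_one {ι R : Type*} [Field R] [LinearOrder R]
    [IsStrictOrderedRing R] {s : Finset ι} {z y : ι → R}
    (hz : ∀ i ∈ s, 0 ≤ z i) (hzy : ∀ i ∈ s, z i ≤ y i) (hy : ∀ i ∈ s, y i = 0 ∨ y i = 1)
    (hysum : ∑ i ∈ s, y i ≤ 1) (hzsum : ∑ i ∈ s, z i = 1) :
    ∃ b ∈ s, z b = 1 ∧ ∀ i ∈ s, i ≠ b → z i = 0 := by
  classical
  have hzy_eq : ∀ i ∈ s, z i = y i := (Finset.sum_eq_sum_iff_of_le hzy).mp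
    (le_antisymm (Finset.sum_le_sum hzy) (hysum.trans hzsum.ge))
  obtain ⟨b, hb, hzb⟩ := Finset.exists_ne_zero_of_sum_ne_zero (hzsum ▸ one_ne_zero)
  have hzb_one : z b = 1 := by
    rw [hzy_eq b hb] at hzb ⊢
    exact (hy b hb).resolve_left hzb
  refine ⟨b, hb, hzb_one, fun i hi hib => ?_⟩
  have hrest : ∑ j ∈ s.erase b, z j = 0 := by linarith [Finset.add_sum_erase s z hb]
  exact (Finset.sum_eq_zero_iff_of_nonneg fun j hj => hz j (Finset.mem_of_mem_erase hj)).mp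
    hrest i (Finset.mem_erase.mpr ⟨hib, hi⟩)

namespace Skeleton

variable {Node : Type} [DecidableEq Node] (S : Skeleton Node)

theorem mem_succ_of_mem_C {l : ℕ} {v : Node} (hv : v ∈ S.C) : v ∈ S.succ l := by
  unfold succ
  split_ifs
  exacts [Finset.mem_union_right _ hv, hv]

theorem mem_succ_of_mem_V {l : ℕ} (hl : l + 1 < S.D) {v : Node} (hv : v ∈ S.V (l + 1)) :
    v ∈ S.succ l := by
  rw [succ, if_pos (by omega)]
  exact Finset.mem_union_left _ hv

theorem mem_V_of_mem_succ {l : ℕ} {v : Node} (hv : v ∈ S.succ l) (hvC : v ∉ S.C) :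
    l + 1 < S.D ∧ v ∈ S.V (l + 1) := by
  unfold succ at hv
  split_ifs at hv with hl
  · exact ⟨by omega, (Finset.mem_union.mp hv).resolve_right hvC⟩
  · exact absurd hv hvC

theorem notMem_C_of_mem_V {l : ℕ} (hl : l < S.D) {v : Node} (hv : v ∈ S.V l) : v ∉ S.C :=
  Finset.disjoint_left.mp (S.hVC l hl) hv

theorem layer_eq_of_mem_V {i j : ℕ} (hi : i < S.D) (hj : j < S.D) {v : Node}
    (hvi : v ∈ S.V i) (hvj : v ∈ S.V j) : i = j := by
  by_contra hij
  exact Finset.disjoint_left.mp (S.hVdisj i j hi hj hij) hvi hvj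

end Skeleton

namespace FeasibleFlow

variable {Node : Type} [DecidableEq Node] {S : Skeleton Node} (F : FeasibleFlow S)

def nodeFlow (v : Node) : ℝ := F.wp v + F.wm v

def arcFlow (a b : Node) : ℝ := F.zp a b + F.zm a b

theorem arcFlow_eq_zero_iff {a b : Node} : F.arcFlow a b = 0 ↔ F.zp a b = 0 ∧ F.zm a b = 0 :=
  add_eq_zero_iff_of_nonneg (F.zp_nonneg a b) (F.zm_nonneg a b)

theorem nodeFlow_eq_sum_arcFlow_in {l : ℕ} (hl : l + 1 < S.D) {v : Node} (hv : v ∈ S.V (l + 1)) :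
    F.nodeFlow v = ∑ u ∈ S.V l, F.arcFlow u v :=
  F.c1 (l + 1) (by omega) hl v hv

theorem nodeFlow_eq_sum_arcFlow_out {l : ℕ} (hl : l < S.D) {u : Node} (hu : u ∈ S.V l) :
    F.nodeFlow u = ∑ v ∈ S.succ l, F.arcFlow u v := by
  rw [nodeFlow, F.c2p l hl u hu, F.c2m l hl u hu, ← Finset.sum_add_distrib]
  rfl

theorem arcFlow_eq_zero_of_nodeFlow_eq_zero {l : ℕ} (hl : l < S.D) {u : Node} (hu : u ∈ S.V l)
    (h : F.nodeFlow u = 0) {v : Node} (hv : v ∈ S.succ l) : F.arcFlow u v = 0 := by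
  rw [F.nodeFlow_eq_sum_arcFlow_out hl hu] at h
  exact (Finset.sum_eq_zero_iff_of_nonneg fun w _ =>
    add_nonneg (F.zp_nonneg u w) (F.zm_nonneg u w)).mp h v hv

theorem wp_eq_zero_or_wm_eq_zero {l : ℕ} (hl : l < S.D) :
    (∀ u ∈ S.V l, F.wp u = 0) ∨ (∀ u ∈ S.V l, F.wm u = 0) := by
  rcases F.lam_bin l hl with h | h
  · refine .inl ((Finset.sum_eq_zero_iff_of_nonneg fun u _ => F.wp_nonneg u).mp ?_)
    exact le_antisymm (h ▸ F.c3p l hl) (Finset.sum_nonneg fun u _ => F.wp_nonneg u)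
  · refine .inr ((Finset.sum_eq_zero_iff_of_nonneg fun u _ => F.wm_nonneg u).mp ?_)
    exact le_antisymm (by linarith [F.c3m l hl]) (Finset.sum_nonneg fun u _ => F.wm_nonneg u)

/-- On the layer of `a` only one of `z⁺`, `z⁻` is nonzero (C3); that one is dominated by a binary
vector `y` summing to `d a ≤ 1` (C4, C5), which forces it to be a unit vector. -/
theorem exists_arc_of_nodeFlow_eq_one {l : ℕ} (hl : l < S.D) {a : Node} (ha : a ∈ S.V l)
    (h : F.nodeFlow a = 1) :
    ∃ b ∈ S.succ l, F.arcFlow a b = 1 ∧ ∀ v ∈ S.succ l, v ≠ b → F.arcFlow a v = 0 := by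
  have hd : F.d a ≤ 1 := by rcases F.d_bin l hl a ha with hd | hd <;> linarith
  rw [nodeFlow] at h
  rcases F.wp_eq_zero_or_wm_eq_zero hl with hwp | hwm
  · have hzp : ∀ v ∈ S.succ l, F.zp a v = 0 :=
      (Finset.sum_eq_zero_iff_of_nonneg fun v _ => F.zp_nonneg a v).mp
        ((F.c2p l hl a ha).symm.trans (hwp a ha))
    obtain ⟨b, hb, hb_one, hzero⟩ := Finset.exists_eq_one_of_le_of_sum_eq_one
      (fun v _ => F.zm_nonneg a v) (F.c5m l hl a ha) (F.ym_bin l hl a ha)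
      (by rw [← F.c4m l hl a ha]; exact hd) (by rw [← F.c2m l hl a ha]; linarith [hwp a ha])
    exact ⟨b, hb, by simp [arcFlow, hzp b hb, hb_one],
      fun v hv hvb => by simp [arcFlow, hzp v hv, hzero v hv hvb]⟩
  · have hzm : ∀ v ∈ S.succ l, F.zm a v = 0 :=
      (Finset.sum_eq_zero_iff_of_nonneg fun v _ => F.zm_nonneg a v).mp
        ((F.c2m l hl a ha).symm.trans (hwm a ha))
    obtain ⟨b, hb, hb_one, hzero⟩ := Finset.exists_eq_one_of_le_of_sum_eq_one
      (fun v _ => F.zp_nonneg a v) (F.c5p l hl a ha) (F.yp_bin l hl a ha)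
      (by rw [← F.c4p l hl a ha]; exact hd) (by rw [← F.c2p l hl a ha]; linarith [hwm a ha])
    exact ⟨b, hb, by simp [arcFlow, hzm b hb, hb_one],
      fun v hv hvb => by simp [arcFlow, hzm v hv, hzero v hv hvb]⟩

theorem nodeFlow_eq_zero_of_layer {l : ℕ} (h : ∀ v ∈ S.V l, F.nodeFlow v = 0) {i : ℕ}
    (hli : l ≤ i) (hi : i < S.D) : ∀ v ∈ S.V i, F.nodeFlow v = 0 := by
  induction i, hli using Nat.le_induction with
  | base => exact h
  | succ i hli ih =>
    intro v hv
    rw [F.nodeFlow_eq_sum_arcFlow_in hi hv]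
    exact Finset.sum_eq_zero fun u hu => F.arcFlow_eq_zero_of_nodeFlow_eq_zero (by omega) hu
      (ih (by omega) u hu) (S.mem_succ_of_mem_V hi hv)

structure FlowConcentratedAt (l : ℕ) (a : Node) : Prop where
  lt_depth : l < S.D
  mem_V : a ∈ S.V l
  nodeFlow_self : F.nodeFlow a = 1
  nodeFlow_of_ne : ∀ v ∈ S.V l, v ≠ a → F.nodeFlow v = 0

theorem flowConcentratedAt_root : F.FlowConcentratedAt 0 S.r where
  lt_depth := S.hD
  mem_V := S.hV0 ▸ Finset.mem_singleton_self _
  nodeFlow_self := F.c1_root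
  nodeFlow_of_ne _ hv hne := absurd (Finset.mem_singleton.mp (S.hV0 ▸ hv)) hne

def OnlyArcWithFlow (l : ℕ) (a b : Node) : Prop :=
  ∀ a' ∈ S.V l, ∀ b' ∈ S.succ l, F.arcFlow a' b' ≠ 0 → a' = a ∧ b' = b

theorem nodeFlow_succ_eq_arcFlow {l : ℕ} {a b : Node} (honly : F.OnlyArcWithFlow l a b)
    (ha : a ∈ S.V l) (hl : l + 1 < S.D) {v : Node} (hv : v ∈ S.V (l + 1)) :
    F.nodeFlow v = F.arcFlow a v := by
  rw [F.nodeFlow_eq_sum_arcFlow_in hl hv]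
  exact Finset.sum_eq_single_of_mem a ha fun u hu hua =>
    by_contra fun hne => hua (honly u hu v (S.mem_succ_of_mem_V hl hv) hne).1

namespace FlowConcentratedAt

variable {F} {l : ℕ} {a : Node}

theorem exists_arc (h : F.FlowConcentratedAt l a) :
    ∃ b ∈ S.succ l, F.arcFlow a b = 1 ∧ F.OnlyArcWithFlow l a b := by
  obtain ⟨b, hb, hab, hzero⟩ := F.exists_arc_of_nodeFlow_eq_one h.lt_depth h.mem_V h.nodeFlow_self
  refine ⟨b, hb, hab, fun a' ha' b' hb' hne => ?_⟩
  by_cases ha'a : a' = a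
  · subst ha'a
    exact ⟨rfl, by_contra fun hb'b => hne (hzero b' hb' hb'b)⟩
  · exact absurd (F.arcFlow_eq_zero_of_nodeFlow_eq_zero h.lt_depth ha'
      (h.nodeFlow_of_ne a' ha' ha'a) hb') hne

theorem next {b : Node} (h : F.FlowConcentratedAt l a) (honly : F.OnlyArcWithFlow l a b)
    (hab : F.arcFlow a b = 1) (hl : l + 1 < S.D) (hb : b ∈ S.V (l + 1)) :
    F.FlowConcentratedAt (l + 1) b where
  lt_depth := hl
  mem_V := hb
  nodeFlow_self := (F.nodeFlow_succ_eq_arcFlow honly h.mem_V hl hb).trans hab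
  nodeFlow_of_ne v hv hvb := (F.nodeFlow_succ_eq_arcFlow honly h.mem_V hl hv).trans <|
    by_contra fun hne => hvb (honly a h.mem_V v (S.mem_succ_of_mem_V hl hv) hne).2

end FlowConcentratedAt

/-- The part of the sample path from layer `l` on. -/
structure IsFlowPathFrom (l k : ℕ) (u : ℕ → Node) : Prop where
  lt_length : l < k
  length_le : k ≤ S.D
  mem_V : ∀ j, l ≤ j → j < k → u j ∈ S.V j
  mem_C : u k ∈ S.C
  arcFlow_path : ∀ j, l ≤ j → j < k → F.arcFlow (u j) (u (j + 1)) = 1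
  eq_path_of_arcFlow_ne_zero : ∀ i, l ≤ i → i < S.D → ∀ a ∈ S.V i, ∀ b ∈ S.succ i,
    F.arcFlow a b ≠ 0 → i < k ∧ a = u i ∧ b = u (i + 1)

variable {F}

theorem FlowConcentratedAt.isFlowPathFrom_of_mem_C {l : ℕ} {a b : Node}
    (h : F.FlowConcentratedAt l a) (honly : F.OnlyArcWithFlow l a b) (hab : F.arcFlow a b = 1)
    (hb : b ∈ S.C) : F.IsFlowPathFrom l (l + 1) (Function.update (fun _ => b) l a) where
  lt_length := l.lt_succ_self
  length_le := h.lt_depth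
  mem_V j hlj hjk := by
    obtain rfl : j = l := by omega
    simpa using h.mem_V
  mem_C := by simpa using hb
  arcFlow_path j hlj hjk := by
    obtain rfl : j = l := by omega
    simpa using hab
  eq_path_of_arcFlow_ne_zero i hli hi a' ha' b' hb' hne := by
    obtain rfl | hli := hli.eq_or_lt
    · obtain ⟨rfl, rfl⟩ := honly a' ha' b' hb' hne
      simp
    · have hl : l + 1 < S.D := by omega
      have hdead : ∀ v ∈ S.V (l + 1), F.nodeFlow v = 0 := fun v hv =>
        (F.nodeFlow_succ_eq_arcFlow honly h.mem_V hl hv).trans <| by_contra fun hne =>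
          S.notMem_C_of_mem_V hl hv ((honly a h.mem_V v (S.mem_succ_of_mem_V hl hv) hne).2 ▸ hb)
      exact absurd (F.arcFlow_eq_zero_of_nodeFlow_eq_zero hi ha'
        (F.nodeFlow_eq_zero_of_layer hdead hli hi a' ha') hb') hne

theorem IsFlowPathFrom.update {l k : ℕ} {u : ℕ → Node} {a : Node}
    (hu : F.IsFlowPathFrom (l + 1) k u) (ha : a ∈ S.V l)
    (honly : F.OnlyArcWithFlow l a (u (l + 1))) (hab : F.arcFlow a (u (l + 1)) = 1) :
    F.IsFlowPathFrom l k (Function.update u l a) where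
  lt_length := Nat.lt_of_succ_lt hu.lt_length
  length_le := hu.length_le
  mem_V j hlj hjk := by
    obtain rfl | hlj := hlj.eq_or_lt
    · simpa using ha
    · simpa [Function.update_of_ne hlj.ne'] using hu.mem_V j hlj hjk
  mem_C := by simpa [Function.update_of_ne (hu.lt_length.trans' l.lt_succ_self).ne'] using hu.mem_C
  arcFlow_path j hlj hjk := by
    obtain rfl | hlj := hlj.eq_or_lt
    · simpa using hab
    · simpa [Function.update_of_ne hlj.ne', Function.update_of_ne (hlj.trans j.lt_succ_self).ne']
        using hu.arcFlow_path j hlj hjk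
  eq_path_of_arcFlow_ne_zero i hli hi a' ha' b' hb' hne := by
    obtain rfl | hli := hli.eq_or_lt
    · obtain ⟨rfl, rfl⟩ := honly a' ha' b' hb' hne
      exact ⟨Nat.lt_of_succ_lt hu.lt_length, by simp, by simp⟩
    · simpa [Function.update_of_ne hli.ne', Function.update_of_ne (hli.trans i.lt_succ_self).ne']
        using hu.eq_path_of_arcFlow_ne_zero i hli hi a' ha' b' hb' hne

theorem FlowConcentratedAt.exists_isFlowPathFrom {l : ℕ} {a : Node}
    (h : F.FlowConcentratedAt l a) : ∃ k u, u l = a ∧ F.IsFlowPathFrom l k u := by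
  obtain ⟨b, hb, hab, honly⟩ := h.exists_arc
  by_cases hbC : b ∈ S.C
  · exact ⟨l + 1, _, by simp, h.isFlowPathFrom_of_mem_C honly hab hbC⟩
  · obtain ⟨hl, hbV⟩ := S.mem_V_of_mem_succ hb hbC
    obtain ⟨k, u, rfl, hu⟩ := (h.next honly hab hl hbV).exists_isFlowPathFrom
    exact ⟨k, _, by simp, hu.update h.mem_V honly hab⟩
termination_by S.D - l

theorem IsFlowPathFrom.isSamplePath {k : ℕ} {u : ℕ → Node} (hu : F.IsFlowPathFrom 0 k u)
    (hr : u 0 = S.r) : IsSamplePath S F k u :=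
  ⟨hu.lt_length, hu.length_le, hr, fun j _ hjk => hu.mem_V j j.zero_le hjk, hu.mem_C,
    fun j hjk => hu.arcFlow_path j j.zero_le hjk,
    fun i hi a ha b hb hoff => F.arcFlow_eq_zero_iff.mp <| by_contra fun hne =>
      let ⟨hik, hai, hbi⟩ := hu.eq_path_of_arcFlow_ne_zero i i.zero_le hi a ha b hb hne
      hoff ⟨i, hik, hai, hbi⟩⟩

theorem exists_isSamplePath : ∃ k u, IsSamplePath S F k u :=
  let ⟨k, u, hr, hu⟩ := F.flowConcentratedAt_root.exists_isFlowPathFrom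
  ⟨k, u, hu.isSamplePath hr⟩

end FeasibleFlow

namespace IsSamplePath

variable {Node : Type} [DecidableEq Node] {S : Skeleton Node} {F : FeasibleFlow S}
  {k k' : ℕ} {u u' : ℕ → Node}

theorem le_depth (hu : IsSamplePath S F k u) : k ≤ S.D := hu.2.1

theorem root (hu : IsSamplePath S F k u) : u 0 = S.r := hu.2.2.1

theorem mem_C (hu : IsSamplePath S F k u) : u k ∈ S.C := hu.2.2.2.2.1

theorem mem_V (hu : IsSamplePath S F k u) {j : ℕ} (hj : j < k) : u j ∈ S.V j := by
  rcases j.eq_zero_or_pos with rfl | hj0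
  · simp [hu.root, S.hV0]
  · exact hu.2.2.2.1 j hj0 hj

theorem mem_succ (hu : IsSamplePath S F k u) {j : ℕ} (hj : j < k) : u (j + 1) ∈ S.succ j := by
  obtain hjk | hjk := (Nat.succ_le_of_lt hj).lt_or_eq
  · exact S.mem_succ_of_mem_V (hjk.trans_le hu.le_depth) (hu.mem_V hjk)
  · subst hjk
    exact S.mem_succ_of_mem_C hu.mem_C

theorem arcFlow_path (hu : IsSamplePath S F k u) {j : ℕ} (hj : j < k) :
    F.arcFlow (u j) (u (j + 1)) = 1 :=
  hu.2.2.2.2.2.1 j hj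

/-- Layers are disjoint, so the path meets layer `j` only at `u j`. -/
theorem eq_of_arcFlow_ne_zero (hu : IsSamplePath S F k u) {j : ℕ} (hj : j < k) {b : Node}
    (hb : b ∈ S.succ j) (hne : F.arcFlow (u j) b ≠ 0) : b = u (j + 1) := by
  have hjD : j < S.D := hj.trans_le hu.le_depth
  by_contra hbj
  refine hne (F.arcFlow_eq_zero_iff.mpr (hu.2.2.2.2.2.2 j hjD _ (hu.mem_V hj) b hb ?_))
  rintro ⟨i, hik, hji, rfl⟩
  obtain rfl :=
    S.layer_eq_of_mem_V (hik.trans_le hu.le_depth) hjD (hji ▸ hu.mem_V hik) (hu.mem_V hj)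
  exact hbj rfl

theorem eq_of_le (hu : IsSamplePath S F k u) (hu' : IsSamplePath S F k' u') :
    ∀ j, j ≤ k → j ≤ k' → u j = u' j
  | 0, _, _ => hu.root.trans hu'.root.symm
  | j + 1, hjk, hjk' => by
    have hj : u j = u' j := hu.eq_of_le hu' j (by omega) (by omega)
    refine (hu.eq_of_arcFlow_ne_zero hjk (hu'.mem_succ hjk') ?_).symm
    rw [hj, hu'.arcFlow_path hjk']
    exact one_ne_zero

theorem length_le (hu : IsSamplePath S F k u) (hu' : IsSamplePath S F k' u') : k ≤ k' := by
  by_contra! hlt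
  have hV : u k' ∈ S.V k' := hu.mem_V hlt
  rw [hu.eq_of_le hu' k' hlt.le le_rfl] at hV
  exact S.notMem_C_of_mem_V (hlt.trans_le hu.le_depth) hV hu'.mem_C

end IsSamplePath

/-- **Unique path decomposition.** For every feasible flow assignment there
exist a unique length `k ∈ {1, …, D}` and a unique sequence
`u 0 = r, u 1 ∈ V 1, …, u (k-1) ∈ V (k-1), u k ∈ C` such that
`z⁺ + z⁻ = 1` on every arc of the sequence and `z⁺ = z⁻ = 0` on every other arc. -/
theorem unique_path_decomposition {Node : Type} [DecidableEq Node]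
    (S : Skeleton Node) (F : FeasibleFlow S) :
    (∃ k : ℕ, ∃ u : ℕ → Node, IsSamplePath S F k u) ∧
    (∀ k k' : ℕ, ∀ u u' : ℕ → Node,
      IsSamplePath S F k u → IsSamplePath S F k' u' →
      k = k' ∧ ∀ j, j ≤ k → u j = u' j) := by
  refine ⟨F.exists_isSamplePath, fun k k' u u' hu hu' => ?_⟩
  have hk : k = k' := (hu.length_le hu').antisymm (hu'.length_le hu)
  exact ⟨hk, fun j hj => hu.eq_of_le hu' j hj (hk ▸ hj)⟩
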